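/- arXiv:1801.03368 — 2 statements merged into one kernel-verified Lean document; each statement's English description precedes it below -/
import Mathlib

section
/- Let α be an arc-length parametrized curve in a three-dimensional Lie group G with bi-invariant metric, with Frenet frame (T,N,B). Then [T,N] = ⟨[T,N],B⟩ B and [T,B] = ⟨[T,B],N⟩ N; in particular, setting τ_G = (1/2)⟨[T,N],B⟩, we have [T,N] = 2τ_G B and [T,B] = -2τ_G N. -/
open Real
open scoped RealInnerProductSpace

/-- Let `α` be a unit-speed curve in a 3-dimensional Lie group `G` with bi-invariant
metric, with Frenet frame `(T, N, B)` (an orthonormal basis of the Lie algebra `g`,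
with bracket `L`, at every parameter, via left translation).  Then
`[T,N] = ⟪[T,N], B⟫ • B` and `[T,B] = ⟪[T,B], N⟫ • N`; and with
`τ_G = (1/2)⟪[T,N], B⟫` one has `[T,N] = 2τ_G • B` and `[T,B] = -2τ_G • N`. -/
theorem bracket_frame_relations
    {E : Type*} [NormedAddCommGroup E] [InnerProductSpace ℝ E]
    (L : E →ₗ[ℝ] E →ₗ[ℝ] E)
    (hanti : ∀ x y : E, L x y = - L y x)
    (hjacobi : ∀ x y z : E, L (L x y) z + L (L y z) x + L (L z x) y = 0)
    (hbi : ∀ x y z : E, ⟪L x y, z⟫ + ⟪y, L x z⟫ = 0)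
    (T N B : ℝ → E)
    (unit_T : ∀ s, ⟪T s, T s⟫ = 1) (unit_N : ∀ s, ⟪N s, N s⟫ = 1)
    (unit_B : ∀ s, ⟪B s, B s⟫ = 1)
    (orth_TN : ∀ s, ⟪T s, N s⟫ = 0) (orth_TB : ∀ s, ⟪T s, B s⟫ = 0)
    (orth_NB : ∀ s, ⟪N s, B s⟫ = 0)
    -- `(T,N,B)` is an orthonormal basis of the 3-dimensional Lie algebra at each `s`:
    (hbasis : ∀ (s : ℝ) (v : E),
      v = ⟪v, T s⟫ • T s + ⟪v, N s⟫ • N s + ⟪v, B s⟫ • B s)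
    (τG : ℝ → ℝ) (hτG : ∀ s, τG s = (1 / 2) * ⟪L (T s) (N s), B s⟫) :
    ∀ s : ℝ,
      L (T s) (N s) = ⟪L (T s) (N s), B s⟫ • B s ∧
      L (T s) (B s) = ⟪L (T s) (B s), N s⟫ • N s ∧
      L (T s) (N s) = (2 * τG s) • B s ∧
      L (T s) (B s) = (-(2 * τG s)) • N s := by
  -- `L x x = 0` from antisymmetry.
  have hLxx : ∀ x : E, L x x = 0 := by
    intro x
    have h := hanti x x
    have h2 : L x x + L x x = 0 := add_eq_zero_iff_eq_neg.mpr h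
    have h3 : (2 : ℝ) • L x x = 0 := by rw [two_smul]; exact h2
    rcases smul_eq_zero.mp h3 with h4 | h4
    · norm_num at h4
    · exact h4
  intro s
  -- `⟪L x y, x⟫ = 0` from bi-invariance and `L x x = 0`.
  have hfirst : ∀ x y : E, ⟪L x y, x⟫ = 0 := by
    intro x y
    have h := hbi x y x
    rw [hLxx x, inner_zero_right] at h
    linarith
  -- `⟪L x y, y⟫ = 0` similarly.
  have hsecond : ∀ x y : E, ⟪L x y, y⟫ = 0 := by
    intro x y
    have h := hbi x y y
    have h' : ⟪L x y, y⟫ = ⟪y, L x y⟫ := real_inner_comm _ _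
    linarith
  have hTN_T : ⟪L (T s) (N s), T s⟫ = 0 := hfirst _ _
  have hTN_N : ⟪L (T s) (N s), N s⟫ = 0 := hsecond _ _
  have hTB_T : ⟪L (T s) (B s), T s⟫ = 0 := hfirst _ _
  have hTB_B : ⟪L (T s) (B s), B s⟫ = 0 := hsecond _ _
  -- `⟪L T B, N⟫ = -⟪L T N, B⟫` from bi-invariance.
  have hswap : ⟪L (T s) (B s), N s⟫ = -⟪L (T s) (N s), B s⟫ := by
    have h := hbi (T s) (N s) (B s)
    have h' : ⟪L (T s) (B s), N s⟫ = ⟪N s, L (T s) (B s)⟫ := real_inner_comm _ _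
    linarith
  have e1 : L (T s) (N s) = ⟪L (T s) (N s), B s⟫ • B s := by
    have h := hbasis s (L (T s) (N s))
    rw [hTN_T, hTN_N, zero_smul, zero_smul, zero_add, zero_add] at h
    exact h
  have e2 : L (T s) (B s) = ⟪L (T s) (B s), N s⟫ • N s := by
    have h := hbasis s (L (T s) (B s))
    rw [hTB_T, hTB_B, zero_smul, zero_smul, zero_add, add_zero] at h
    exact h
  refine ⟨e1, e2, ?_, ?_⟩
  · rw [e1, hτG]; ring_nf
  · rw [e2, hswap, hτG]; ring_nf
end

section
/- A unit-speed curve α in a three-dimensional Lie group G with bi-invariant metric is a general helix if and only if its harmonic curvature function H = (τ - τ_G)/κ is constant; equivalently, if and only if τ = cκ + τ_G for some constant c. -/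
open Real
open scoped RealInnerProductSpace

/-- A unit-speed curve `α` in a three-dimensional Lie group `G` with bi-invariant
metric, together with its Frenet apparatus `(T, N, B, κ, τ)`.  Vector fields along
`α` are identified with curves in the Lie algebra `E` (with bracket `L`) via left
translation; `τ_G = (1/2)⟪[T,N], B⟫`, and the frame satisfies the (ordinary
derivative form of the) Frenet formulas. -/
structure FrenetLieCurve (E : Type*) [NormedAddCommGroup E] [InnerProductSpace ℝ E]
    (L : E →ₗ[ℝ] E →ₗ[ℝ] E) where
  α : ℝ → E
  T : ℝ → E
  N : ℝ → E
  B : ℝ → E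
  κ : ℝ → ℝ
  τ : ℝ → ℝ
  τG : ℝ → ℝ
  deriv_α : ∀ s, deriv α s = T s
  unit_T : ∀ s, ⟪T s, T s⟫ = 1
  unit_N : ∀ s, ⟪N s, N s⟫ = 1
  unit_B : ∀ s, ⟪B s, B s⟫ = 1
  orth_TN : ∀ s, ⟪T s, N s⟫ = 0
  orth_TB : ∀ s, ⟪T s, B s⟫ = 0
  orth_NB : ∀ s, ⟪N s, B s⟫ = 0
  -- `(T,N,B)` is an orthonormal basis of the 3-dimensional Lie algebra at each `s`:
  basis_exp : ∀ (s : ℝ) (v : E),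
    v = ⟪v, T s⟫ • T s + ⟪v, N s⟫ • N s + ⟪v, B s⟫ • B s
  kappa_pos : ∀ s, 0 < κ s
  tauG_def : ∀ s, τG s = (1 / 2) * ⟪L (T s) (N s), B s⟫
  frenet_T : ∀ s, deriv T s = κ s • N s
  frenet_N : ∀ s, deriv N s = -(κ s) • T s + (τ s - τG s) • B s
  frenet_B : ∀ s, deriv B s = (-(τ s - τG s)) • N s

variable {E : Type*} [NormedAddCommGroup E] [InnerProductSpace ℝ E]
  {L : E →ₗ[ℝ] E →ₗ[ℝ] E}

/-- The harmonic curvature function `H = (τ - τ_G)/κ`. -/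
noncomputable def FrenetLieCurve.H (F : FrenetLieCurve E L) : ℝ → ℝ :=
  fun s => (F.τ s - F.τG s) / F.κ s

/-- A curve is a general helix if its tangent makes a constant angle with a fixed
left-invariant unit vector field (a fixed unit element of the Lie algebra). -/
def IsGeneralHelix (F : FrenetLieCurve E L) : Prop :=
  ∃ u : E, ⟪u, u⟫ = 1 ∧ ∃ c : ℝ, ∀ s, ⟪F.T s, u⟫ = c

/- Proof idea (Lancret's argument for the frame `T' = κN, N' = -κT + hB, B' = -hN` with
`h = τ - τ_G`).  If `⟪T, u⟫ = c` then `⟪N, u⟫ = 0`, so `u = cT + bB` and differentiating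
`⟪N, u⟫` gives `h b = κ c`; hence `H = c / b`.  Conversely, if `h = cκ` then `cT + B` has zero
derivative and its normalization is the axis.  The Frenet formulas only prescribe `deriv`, which
is junk at non-differentiable points, so `B` is differentiable only where `h ≠ 0`: when `h ≡ 0`
one argues with `⟪T, u⟫² + ⟪N, u⟫²` instead. -/

theorem hasDerivAt_of_deriv_eq_of_ne_zero {𝕜 V : Type*} [NontriviallyNormedField 𝕜]
    [NormedAddCommGroup V] [NormedSpace 𝕜 V] {f : 𝕜 → V} {x : 𝕜} {v : V}
    (hf : deriv f x = v) (hv : v ≠ 0) : HasDerivAt f v x :=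
  hf ▸ (differentiableAt_of_deriv_ne_zero (hf ▸ hv)).hasDerivAt

theorem is_const_of_hasDerivAt_zero {𝕜 V : Type*} [RCLike 𝕜] [NormedAddCommGroup V]
    [NormedSpace 𝕜 V] {f : 𝕜 → V} (hf : ∀ x, HasDerivAt f 0 x) (x y : 𝕜) : f x = f y :=
  is_const_of_deriv_eq_zero (fun z => (hf z).differentiableAt) (fun z => (hf z).deriv) x y

theorem ne_zero_of_real_inner_self_eq_one {V : Type*} [NormedAddCommGroup V]
    [InnerProductSpace ℝ V] {v : V} (hv : ⟪v, v⟫ = 1) : v ≠ 0 := by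
  rintro rfl
  simp at hv

namespace FrenetLieCurve

variable (F : FrenetLieCurve E L)

theorem H_eq_iff_tau_eq (s c : ℝ) : F.H s = c ↔ F.τ s = c * F.κ s + F.τG s := by
  rw [H, div_eq_iff (F.kappa_pos s).ne']
  constructor <;> intro h <;> linarith

theorem hasDerivAt_T (s : ℝ) : HasDerivAt F.T (F.κ s • F.N s) s :=
  hasDerivAt_of_deriv_eq_of_ne_zero (F.frenet_T s)
    (smul_ne_zero (F.kappa_pos s).ne' (ne_zero_of_real_inner_self_eq_one (F.unit_N s)))

theorem hasDerivAt_N (s : ℝ) :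
    HasDerivAt F.N (-(F.κ s) • F.T s + (F.τ s - F.τG s) • F.B s) s := by
  refine hasDerivAt_of_deriv_eq_of_ne_zero (F.frenet_N s) fun h => (F.kappa_pos s).ne' ?_
  have h0 := congrArg (fun v => ⟪F.T s, v⟫) h
  simp only [inner_add_right, real_inner_smul_right, F.unit_T s, F.orth_TB s,
    inner_zero_right] at h0
  linarith

theorem hasDerivAt_B {s : ℝ} (hs : F.τ s ≠ F.τG s) :
    HasDerivAt F.B (-(F.τ s - F.τG s) • F.N s) s :=
  hasDerivAt_of_deriv_eq_of_ne_zero (F.frenet_B s)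
    (smul_ne_zero (neg_ne_zero.mpr (sub_ne_zero.mpr hs))
      (ne_zero_of_real_inner_self_eq_one (F.unit_N s)))

variable {F}

theorem hasDerivAt_inner_T (u : E) (s : ℝ) :
    HasDerivAt (fun s => ⟪F.T s, u⟫) (F.κ s * ⟪F.N s, u⟫) s := by
  simpa [real_inner_smul_left] using (F.hasDerivAt_T s).inner ℝ (hasDerivAt_const s u)

theorem hasDerivAt_inner_N (u : E) (s : ℝ) :
    HasDerivAt (fun s => ⟪F.N s, u⟫)
      (-(F.κ s) * ⟪F.T s, u⟫ + (F.τ s - F.τG s) * ⟪F.B s, u⟫) s := by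
  simpa [inner_add_left, real_inner_smul_left] using
    (F.hasDerivAt_N s).inner ℝ (hasDerivAt_const s u)

theorem hasDerivAt_inner_B (u : E) {s : ℝ} (hs : F.τ s ≠ F.τG s) :
    HasDerivAt (fun s => ⟪F.B s, u⟫) (-(F.τ s - F.τG s) * ⟪F.N s, u⟫) s := by
  simpa [real_inner_smul_left] using (F.hasDerivAt_B hs).inner ℝ (hasDerivAt_const s u)

variable (F) in
theorem inner_T_sq_add_inner_N_sq_add_inner_B_sq {u : E} (hu : ⟪u, u⟫ = 1) (s : ℝ) :
    ⟪F.T s, u⟫ ^ 2 + ⟪F.N s, u⟫ ^ 2 + ⟪F.B s, u⟫ ^ 2 = 1 := by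
  have h := congrArg (⟪·, u⟫) (F.basis_exp s u)
  simp only [inner_add_left, real_inner_smul_left, hu] at h
  rw [real_inner_comm (F.T s), real_inner_comm (F.N s), real_inner_comm (F.B s)] at h
  linear_combination -h

section Axis

variable {u : E} {c : ℝ} (hc : ∀ s, ⟪F.T s, u⟫ = c)
include hc

theorem inner_N_eq_zero_of_inner_T_const (s : ℝ) : ⟪F.N s, u⟫ = 0 := by
  have h := (hasDerivAt_inner_T u s).unique
    ((funext hc : (fun s => ⟪F.T s, u⟫) = fun _ => c) ▸ hasDerivAt_const s c)
  exact (mul_eq_zero.mp h).resolve_left (F.kappa_pos s).ne'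

theorem tau_sub_tauG_mul_inner_B_of_inner_T_const (s : ℝ) :
    (F.τ s - F.τG s) * ⟪F.B s, u⟫ = F.κ s * c := by
  have h := (hasDerivAt_inner_N u s).unique
    ((funext (inner_N_eq_zero_of_inner_T_const hc) : (fun s => ⟪F.N s, u⟫) = fun _ => 0) ▸
      hasDerivAt_const s (0 : ℝ))
  rw [hc s] at h
  linarith

theorem H_eq_div_inner_B_of_inner_T_const (hu : ⟪u, u⟫ = 1) (s : ℝ) :
    F.H s = c / ⟪F.B s, u⟫ := by
  have hsq := F.inner_T_sq_add_inner_N_sq_add_inner_B_sq hu s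
  rw [hc s, inner_N_eq_zero_of_inner_T_const hc s] at hsq
  have hmul := tau_sub_tauG_mul_inner_B_of_inner_T_const hc s
  -- `⟪B, u⟫ = 0` would force `c² = 1`, contradicting `κ c = h ⟪B, u⟫ = 0`.
  have hB : ⟪F.B s, u⟫ ≠ 0 := by
    intro h0
    rw [h0, mul_zero] at hmul
    rcases mul_eq_zero.mp hmul.symm with hκ | rfl
    · exact (F.kappa_pos s).ne' hκ
    · norm_num [h0] at hsq
  rw [H, div_eq_div_iff (F.kappa_pos s).ne' hB]
  linarith

theorem inner_B_const_of_inner_T_const (hc0 : c ≠ 0) (s t : ℝ) :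
    ⟪F.B s, u⟫ = ⟪F.B t, u⟫ := by
  refine is_const_of_hasDerivAt_zero (f := fun r => ⟪F.B r, u⟫) (fun r => ?_) s t
  have hr : F.τ r ≠ F.τG r := fun h => by
    have := tau_sub_tauG_mul_inner_B_of_inner_T_const hc r
    rw [h, sub_self, zero_mul] at this
    exact mul_ne_zero (F.kappa_pos r).ne' hc0 this.symm
  simpa [inner_N_eq_zero_of_inner_T_const hc r] using hasDerivAt_inner_B u hr

end Axis

theorem IsGeneralHelix.exists_H_eq (hF : IsGeneralHelix F) : ∃ c, ∀ s, F.H s = c := by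
  obtain ⟨u, hu, c, hc⟩ := hF
  refine ⟨c / ⟪F.B 0, u⟫, fun s => ?_⟩
  rw [H_eq_div_inner_B_of_inner_T_const hc hu]
  rcases eq_or_ne c 0 with rfl | hc0
  · simp
  · rw [inner_B_const_of_inner_T_const hc hc0 s 0]

theorem isGeneralHelix_of_inner_T_const {w : E} (hw : w ≠ 0) {c : ℝ}
    (hc : ∀ s, ⟪F.T s, w⟫ = c) : IsGeneralHelix F := by
  refine ⟨‖w‖⁻¹ • w, ?_, ‖w‖⁻¹ * c, fun s => by rw [real_inner_smul_right, hc s]⟩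
  rw [real_inner_smul_left, real_inner_smul_right, real_inner_self_eq_norm_sq]
  field_simp

theorem isGeneralHelix_of_tau_eq_tauG (hτ : ∀ s, F.τ s = F.τG s) : IsGeneralHelix F := by
  refine ⟨F.B 0, F.unit_B 0, 0, fun s => ?_⟩
  have hderiv : ∀ r, HasDerivAt (fun r => ⟪F.T r, F.B 0⟫ ^ 2 + ⟪F.N r, F.B 0⟫ ^ 2) 0 r :=
    fun r => (((hasDerivAt_inner_T (F.B 0) r).pow 2).add
      ((hasDerivAt_inner_N (F.B 0) r).pow 2)).congr_deriv (by rw [hτ r]; ring)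
  have hsum := is_const_of_hasDerivAt_zero hderiv s 0
  simp only [F.orth_TB 0, F.orth_NB 0] at hsum
  nlinarith [sq_nonneg ⟪F.T s, F.B 0⟫, sq_nonneg ⟪F.N s, F.B 0⟫]

theorem isGeneralHelix_of_H_eq_of_ne_zero {c : ℝ} (hc0 : c ≠ 0) (hH : ∀ s, F.H s = c) :
    IsGeneralHelix F := by
  have hτ s : F.τ s = c * F.κ s + F.τG s := (F.H_eq_iff_tau_eq s c).mp (hH s)
  have hne s : F.τ s ≠ F.τG s := by
    rw [hτ s]
    simpa using mul_ne_zero hc0 (F.kappa_pos s).ne'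
  set w := c • F.T 0 + F.B 0
  have hconst s : c • F.T s + F.B s = w := by
    refine is_const_of_hasDerivAt_zero (f := fun r => c • F.T r + F.B r) (fun r => ?_) s 0
    refine (((F.hasDerivAt_T r).const_smul c).add (F.hasDerivAt_B (hne r))).congr_deriv ?_
    rw [hτ r, smul_smul, ← add_smul]
    simp
  have hTw s : ⟪F.T s, w⟫ = c := by
    rw [← hconst s, inner_add_right, real_inner_smul_right, F.unit_T s, F.orth_TB s]
    ring
  have hBw : ⟪F.B 0, w⟫ = 1 := by
    rw [inner_add_right, real_inner_smul_right, real_inner_comm, F.orth_TB 0, F.unit_B 0]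
    ring
  exact isGeneralHelix_of_inner_T_const (fun hw => by simp [hw] at hBw) hTw

theorem isGeneralHelix_iff_exists_H_eq : IsGeneralHelix F ↔ ∃ c, ∀ s, F.H s = c := by
  refine ⟨IsGeneralHelix.exists_H_eq, fun ⟨c, hH⟩ => ?_⟩
  rcases eq_or_ne c 0 with rfl | hc0
  · exact isGeneralHelix_of_tau_eq_tauG fun s => by
      simpa using (F.H_eq_iff_tau_eq s 0).mp (hH s)
  · exact isGeneralHelix_of_H_eq_of_ne_zero hc0 hH

end FrenetLieCurve

theorem general_helix_iff_harmonic_curvature_constant_general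
    (F : FrenetLieCurve E L) :
    (IsGeneralHelix F ↔ ∃ c : ℝ, ∀ s, F.H s = c) ∧
    (IsGeneralHelix F ↔ ∃ c : ℝ, ∀ s, F.τ s = c * F.κ s + F.τG s) := by
  refine ⟨FrenetLieCurve.isGeneralHelix_iff_exists_H_eq, ?_⟩
  rw [FrenetLieCurve.isGeneralHelix_iff_exists_H_eq]
  exact exists_congr fun c => forall_congr' fun s => F.H_eq_iff_tau_eq s c

/-- A unit-speed curve in a three-dimensional Lie group with bi-invariant metric is a
general helix iff its harmonic curvature function `H = (τ - τ_G)/κ` is constant,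
equivalently iff `τ = cκ + τ_G` for some constant `c`. -/
theorem general_helix_iff_harmonic_curvature_constant
    (hanti : ∀ x y : E, L x y = - L y x)
    (hjacobi : ∀ x y z : E, L (L x y) z + L (L y z) x + L (L z x) y = 0)
    (hbi : ∀ x y z : E, ⟪L x y, z⟫ + ⟪y, L x z⟫ = 0)
    (F : FrenetLieCurve E L) :
    (IsGeneralHelix F ↔ ∃ c : ℝ, ∀ s, F.H s = c) ∧
    (IsGeneralHelix F ↔ ∃ c : ℝ, ∀ s, F.τ s = c * F.κ s + F.τG s) :=
  general_helix_iff_harmonic_curvature_constant_general F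
end
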